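/- The function u₁(x,y,t) = λ₁ t^{-1/2} Ψ₂(1/2; (1+2α)/2, (1+2β)/2; −x²/(8t), −y²/(8t)) satisfies the degenerate parabolic equation u_t − u_{xx} − u_{yy} − (2α/x) u_x − (2β/y) u_y = 0 for all x > 0, y > 0, t > 0. -/

import Mathlib

/-- Pochhammer symbol (a)_m = a(a+1)⋯(a+m−1). -/
noncomputable def poch (a : ℝ) (m : ℕ) : ℝ := ∏ i ∈ Finset.range m, (a + i)

/-- The Humbert confluent hypergeometric function Ψ₂(a;c₁,c₂;x,y). -/
noncomputable def Psi2 (a c₁ c₂ x y : ℝ) : ℝ :=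
  ∑' p : ℕ × ℕ,
    poch a (p.1 + p.2) /
        (poch c₁ p.1 * poch c₂ p.2 * (Nat.factorial p.1 : ℝ) * (Nat.factorial p.2 : ℝ))
      * x ^ p.1 * y ^ p.2

/-- u₁(x,y,t) = λ₁ t^{-1/2} Ψ₂(1/2; (1+2α)/2, (1+2β)/2; −x²/(8t), −y²/(8t)). -/
noncomputable def uPsi1 (α β lam x y t : ℝ) : ℝ :=
  lam * t ^ (-(1 / 2) : ℝ) *
    Psi2 (1 / 2) ((1 + 2 * α) / 2) ((1 + 2 * β) / 2)
      (-(x ^ 2) / (8 * t)) (-(y ^ 2) / (8 * t))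

/-!
Write `X = -x²/(8t)`, `Y = -y²/(8t)`, `c₁ = (1 + 2α)/2`, `c₂ = (1 + 2β)/2`, `a = 1/2`, and
`θ_X = X ∂_X`, `θ_Y = Y ∂_Y`. Since the series of Ψ₂ converges absolutely everywhere, it can be
differentiated termwise: in `x` as a power series in `x`, in `t` as a power series in `1/t`.
This gives `u_t = -λ t^{-3/2} (a + θ_X + θ_Y) Ψ₂` and
`u_xx + (2α/x) u_x = -(λ t^{-3/2}/2) X⁻¹ θ_X (θ_X + c₁ - 1) Ψ₂`, and symmetrically in `y`.
The equation then reduces to the Humbert system `θ_X (θ_X + c₁ - 1) Ψ₂ = X (a + θ_X + θ_Y) Ψ₂`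
and its mirror image in `Y`, which after the shift `m ↦ m + 1` of the summation index is the
relation `(a)_{m+n+1} = (a)_{m+n} (a + m + n)`.
-/

section EntireSeries

variable {ι : Type*} {a : ι → ℝ} {k : ι → ℕ}

lemma natCast_le_two_pow (n : ℕ) : (n : ℝ) ≤ 2 ^ n := by
  exact_mod_cast Nat.lt_two_pow_self.le

lemma abs_natCast_mul_natCast_sub_one_le (n : ℕ) : |(n : ℝ) * (n - 1)| ≤ 4 ^ n := by
  rcases n with _ | n
  · simp
  have h := natCast_le_two_pow (n + 1)
  push_cast at h ⊢
  rw [add_sub_cancel_right, abs_of_nonneg (by positivity)]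
  calc ((n : ℝ) + 1) * n ≤ 2 ^ (n + 1) * 2 ^ (n + 1) :=
        mul_le_mul h (by linarith) n.cast_nonneg (by positivity)
    _ = 4 ^ (n + 1) := by rw [← mul_pow]; norm_num

lemma natCast_mul_pow_sub_one_mul (n : ℕ) (x : ℝ) : (n : ℝ) * x ^ (n - 1) * x = n * x ^ n := by
  cases n with
  | zero => simp
  | succ n => rw [Nat.add_sub_cancel, pow_succ, mul_assoc]

lemma abs_natCast_mul_pow_sub_one_le {s R : ℝ} (hs : |s| ≤ R) (hR : 1 ≤ R) (n : ℕ) :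
    |n * s ^ (n - 1)| ≤ (2 * R) ^ n := by
  rw [abs_mul, Nat.abs_cast, abs_pow, mul_pow]
  gcongr
  · exact natCast_le_two_pow n
  · calc |s| ^ (n - 1) ≤ R ^ (n - 1) := by gcongr
      _ ≤ R ^ n := pow_le_pow_right₀ hR (Nat.sub_le n 1)

lemma summable_mul_mul_pow (ha : ∀ R, Summable fun i => a i * R ^ k i) {w : ι → ℝ} {D : ℝ}
    (hw : ∀ i, |w i| ≤ D ^ k i) (x : ℝ) : Summable fun i => a i * w i * x ^ k i := by
  refine .of_norm_bounded (ha (D * |x|)).abs fun i => ?_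
  calc ‖a i * w i * x ^ k i‖ = |a i| * |w i| * |x| ^ k i := by
        rw [Real.norm_eq_abs, abs_mul, abs_mul, abs_pow]
    _ ≤ |a i| * |D| ^ k i * |x| ^ k i := by
        gcongr
        exact (hw i).trans ((le_abs_self _).trans (abs_pow D _).le)
    _ = |a i * (D * |x|) ^ k i| := by
        rw [abs_mul, abs_pow, abs_mul, abs_abs, mul_pow, mul_assoc]

lemma summable_mul_natCast_mul_pow (ha : ∀ R, Summable fun i => a i * R ^ k i) (x : ℝ) :
    Summable fun i => a i * k i * x ^ k i :=
  summable_mul_mul_pow ha (D := 2) (fun i => by simpa using natCast_le_two_pow (k i)) x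

lemma summable_mul_natCast_mul_pow_sub_one (ha : ∀ R, Summable fun i => a i * R ^ k i) (x : ℝ) :
    Summable fun i => a i * k i * x ^ (k i - 1) := by
  refine .of_norm_bounded (ha (2 * (|x| + 1))).abs fun i => ?_
  rw [Real.norm_eq_abs, mul_assoc, abs_mul, abs_mul (a i)]
  exact mul_le_mul_of_nonneg_left ((abs_natCast_mul_pow_sub_one_le (by linarith) (by simp) _).trans
    (le_abs_self _)) (abs_nonneg _)

lemma hasDerivAt_tsum_mul_pow (ha : ∀ R, Summable fun i => a i * R ^ k i) (x : ℝ) :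
    HasDerivAt (fun s => ∑' i, a i * s ^ k i) (∑' i, a i * k i * x ^ (k i - 1)) x := by
  have hx : x ∈ Metric.ball (0 : ℝ) (|x| + 1) := by simp
  refine hasDerivAt_tsum_of_isPreconnected (g := fun i s => a i * s ^ k i)
    (g' := fun i s => a i * k i * s ^ (k i - 1)) (ha (2 * (|x| + 1))).abs Metric.isOpen_ball
    (convex_ball 0 _).isPreconnected (fun i s _ => ?_) (fun i s hs => ?_) hx (ha x) hx
  · simpa [mul_assoc] using (hasDerivAt_pow (k i) s).const_mul (a i)
  · rw [Real.norm_eq_abs, mul_assoc, abs_mul, abs_mul (a i)]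
    refine mul_le_mul_of_nonneg_left ((abs_natCast_mul_pow_sub_one_le ?_ (by simp) _).trans
      (le_abs_self _)) (abs_nonneg _)
    exact (mem_ball_zero_iff.1 hs).le

lemma differentiable_tsum_mul_pow (ha : ∀ R, Summable fun i => a i * R ^ k i) :
    Differentiable ℝ fun s => ∑' i, a i * s ^ k i :=
  fun x => (hasDerivAt_tsum_mul_pow ha x).differentiableAt

lemma mul_deriv_tsum_mul_pow (ha : ∀ R, Summable fun i => a i * R ^ k i) (x : ℝ) :
    x * deriv (fun s => ∑' i, a i * s ^ k i) x = ∑' i, a i * k i * x ^ k i := by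
  rw [(hasDerivAt_tsum_mul_pow ha x).deriv, ← tsum_mul_left]
  congr 1 with i
  rw [mul_comm x, mul_assoc (a i), mul_assoc (a i), natCast_mul_pow_sub_one_mul, mul_assoc]

lemma sq_mul_iteratedDeriv_two_tsum_mul_pow (ha : ∀ R, Summable fun i => a i * R ^ k i) (x : ℝ) :
    x ^ 2 * iteratedDeriv 2 (fun s => ∑' i, a i * s ^ k i) x
      = ∑' i, a i * (k i * (k i - 1)) * x ^ k i := by
  have hderiv : deriv (fun s => ∑' i, a i * s ^ k i) = fun s => ∑' i, a i * k i * s ^ (k i - 1) :=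
    funext fun s => (hasDerivAt_tsum_mul_pow ha s).deriv
  rw [iteratedDeriv_succ, iteratedDeriv_one, hderiv,
    (hasDerivAt_tsum_mul_pow (summable_mul_natCast_mul_pow_sub_one ha) x).deriv, ← tsum_mul_left]
  congr 1 with i
  rcases k i with _ | _ | n
  · simp
  · simp
  · simp only [Nat.add_sub_cancel]
    push_cast
    ring

lemma mul_deriv_add_tsum_mul_pow (ha : ∀ R, Summable fun i => a i * R ^ k i) (b x : ℝ) :
    x * deriv (fun s => ∑' i, a i * s ^ k i) x + b * ∑' i, a i * x ^ k i
      = ∑' i, a i * (k i + b) * x ^ k i := by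
  rw [mul_deriv_tsum_mul_pow ha, ← tsum_mul_left,
    ← (summable_mul_natCast_mul_pow ha x).tsum_add ((ha x).mul_left b)]
  congr 1 with i
  ring

lemma sq_mul_iteratedDeriv_two_add_mul_deriv_tsum_mul_pow
    (ha : ∀ R, Summable fun i => a i * R ^ k i) (b x : ℝ) :
    x ^ 2 * iteratedDeriv 2 (fun s => ∑' i, a i * s ^ k i) x
        + b * x * deriv (fun s => ∑' i, a i * s ^ k i) x
      = ∑' i, a i * (k i * (k i - 1) + b * k i) * x ^ k i := by
  have hkk : Summable fun i => a i * (k i * (k i - 1)) * x ^ k i :=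
    summable_mul_mul_pow ha (fun i => abs_natCast_mul_natCast_sub_one_le (k i)) x
  rw [sq_mul_iteratedDeriv_two_tsum_mul_pow ha, mul_assoc, mul_deriv_tsum_mul_pow ha,
    ← tsum_mul_left, ← hkk.tsum_add ((summable_mul_natCast_mul_pow ha x).mul_left b)]
  congr 1 with i
  ring

end EntireSeries

lemma poch_succ (c : ℝ) (m : ℕ) : poch c (m + 1) = poch c m * (c + m) :=
  Finset.prod_range_succ _ _

lemma poch_ne_zero {c : ℝ} (hc : ∀ n : ℕ, c ≠ -n) (m : ℕ) : poch c m ≠ 0 :=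
  Finset.prod_ne_zero_iff.2 fun i _ h => hc i (by linarith)

lemma abs_poch_le (a : ℝ) (m : ℕ) : |poch a m| ≤ (|a| + 1) ^ m * m.factorial := by
  calc |poch a m| = ∏ i ∈ Finset.range m, |a + i| := Finset.abs_prod _ _
    _ ≤ ∏ i ∈ Finset.range m, ((|a| + 1) * (i + 1)) := by
        gcongr with i
        have hi : (0 : ℝ) ≤ i := i.cast_nonneg
        calc |a + i| ≤ |a| + i := by simpa using abs_add_le a i
          _ ≤ (|a| + 1) * (i + 1) := by nlinarith [abs_nonneg a]
    _ = (|a| + 1) ^ m * m.factorial := by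
        rw [Finset.prod_mul_distrib, Finset.prod_const, Finset.card_range,
          ← Finset.prod_range_add_one_eq_factorial]
        push_cast
        rfl

lemma factorial_add_le_two_pow_mul (m n : ℕ) :
    ((m + n).factorial : ℝ) ≤ 2 ^ (m + n) * m.factorial * n.factorial := by
  rw [← Nat.add_choose_mul_factorial_mul_factorial m n]
  push_cast
  gcongr
  exact_mod_cast Nat.choose_le_two_pow (m + n) n

lemma summable_pow_div_abs_poch {c : ℝ} (hc : ∀ n : ℕ, c ≠ -n) {D : ℝ} (hD : 0 < D) :
    Summable fun m : ℕ => D ^ m / |poch c m| := by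
  have hpos : ∀ m, 0 < |poch c m| := fun m => abs_pos.2 (poch_ne_zero hc m)
  have hratio : ∀ m : ℕ, ‖D ^ (m + 1) / |poch c (m + 1)|‖ / ‖D ^ m / |poch c m|‖
      = D * |c + m|⁻¹ := by
    intro m
    have hcm : c + m ≠ 0 := fun h => hc m (by linarith)
    have hm := (hpos m).ne'
    rw [Real.norm_of_nonneg (by positivity), Real.norm_of_nonneg (by positivity), poch_succ,
      abs_mul]
    field_simp
    ring
  refine summable_of_ratio_test_tendsto_lt_one zero_lt_one
    (.of_forall fun m => (div_pos (pow_pos hD m) (hpos m)).ne') ?_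
  simp only [hratio]
  simpa using (tendsto_inv_atTop_zero.comp (Filter.tendsto_abs_atTop_atTop.comp
    (Filter.tendsto_atTop_add_const_left _ c tendsto_natCast_atTop_atTop))).const_mul D

noncomputable def psi2Coeff (a c₁ c₂ : ℝ) (p : ℕ × ℕ) : ℝ :=
  poch a (p.1 + p.2) /
    (poch c₁ p.1 * poch c₂ p.2 * (Nat.factorial p.1 : ℝ) * (Nat.factorial p.2 : ℝ))

/-- `(a + θ_X + θ_Y) Ψ₂(a; c₁, c₂; X, Y)`. -/
noncomputable def psi2Euler (a c₁ c₂ X Y : ℝ) : ℝ :=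
  ∑' p : ℕ × ℕ, psi2Coeff a c₁ c₂ p * X ^ p.1 * Y ^ p.2 * (a + p.1 + p.2)

lemma abs_psi2Coeff_le (a c₁ c₂ : ℝ) (m n : ℕ) :
    |psi2Coeff a c₁ c₂ (m, n)|
      ≤ (2 * (|a| + 1)) ^ m / |poch c₁ m| * ((2 * (|a| + 1)) ^ n / |poch c₂ n|) := by
  have hfact : (0 : ℝ) < m.factorial * n.factorial := by positivity
  have hnum : |poch a (m + n)| / (m.factorial * n.factorial) ≤ (2 * (|a| + 1)) ^ (m + n) := by
    rw [div_le_iff₀ hfact]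
    calc |poch a (m + n)| ≤ (|a| + 1) ^ (m + n) * (m + n).factorial := abs_poch_le a (m + n)
      _ ≤ (|a| + 1) ^ (m + n) * (2 ^ (m + n) * m.factorial * n.factorial) := by
          gcongr; exact factorial_add_le_two_pow_mul m n
      _ = (2 * (|a| + 1)) ^ (m + n) * (m.factorial * n.factorial) := by rw [mul_pow]; ring
  calc |psi2Coeff a c₁ c₂ (m, n)|
      = |poch a (m + n)| / (m.factorial * n.factorial) / (|poch c₁ m| * |poch c₂ n|) := by
        simp only [psi2Coeff, abs_div, abs_mul, Nat.abs_cast]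
        rw [div_div]
        ring_nf
    _ ≤ (2 * (|a| + 1)) ^ (m + n) / (|poch c₁ m| * |poch c₂ n|) := by gcongr
    _ = _ := by rw [pow_add, div_mul_div_comm]

lemma summable_psi2Coeff_mul_pow (a : ℝ) {c₁ c₂ : ℝ} (hc₁ : ∀ n : ℕ, c₁ ≠ -n)
    (hc₂ : ∀ n : ℕ, c₂ ≠ -n) (X Y : ℝ) :
    Summable fun p : ℕ × ℕ => psi2Coeff a c₁ c₂ p * X ^ p.1 * Y ^ p.2 := by
  have hX : 0 < 2 * (|a| + 1) * (|X| + 1) := by positivity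
  have hY : 0 < 2 * (|a| + 1) * (|Y| + 1) := by positivity
  refine .of_norm_bounded ((summable_pow_div_abs_poch hc₁ hX).mul_of_nonneg
    (summable_pow_div_abs_poch hc₂ hY) (fun _ => by positivity) (fun _ => by positivity))
    fun ⟨m, n⟩ => ?_
  calc ‖psi2Coeff a c₁ c₂ (m, n) * X ^ m * Y ^ n‖
      = |psi2Coeff a c₁ c₂ (m, n)| * |X| ^ m * |Y| ^ n := by
        rw [Real.norm_eq_abs, abs_mul, abs_mul, abs_pow, abs_pow]
    _ ≤ (2 * (|a| + 1)) ^ m / |poch c₁ m| * ((2 * (|a| + 1)) ^ n / |poch c₂ n|)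
          * (|X| + 1) ^ m * (|Y| + 1) ^ n := by
        gcongr
        · exact abs_psi2Coeff_le a c₁ c₂ m n
        · linarith
        · linarith
    _ = (2 * (|a| + 1) * (|X| + 1)) ^ m / |poch c₁ m|
          * ((2 * (|a| + 1) * (|Y| + 1)) ^ n / |poch c₂ n|) := by
        rw [mul_pow _ (|X| + 1), mul_pow _ (|Y| + 1)]; ring

lemma psi2Coeff_swap (a c₁ c₂ : ℝ) (p : ℕ × ℕ) :
    psi2Coeff a c₂ c₁ p.swap = psi2Coeff a c₁ c₂ p := by
  simp only [psi2Coeff, Prod.fst_swap, Prod.snd_swap, add_comm p.2]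
  ring

lemma Psi2_swap (a c₁ c₂ X Y : ℝ) : Psi2 a c₁ c₂ X Y = Psi2 a c₂ c₁ Y X := by
  show ∑' p, psi2Coeff a c₁ c₂ p * X ^ p.1 * Y ^ p.2
    = ∑' p, psi2Coeff a c₂ c₁ p * Y ^ p.1 * X ^ p.2
  rw [← (Equiv.prodComm ℕ ℕ).tsum_eq fun p => psi2Coeff a c₂ c₁ p * Y ^ p.1 * X ^ p.2]
  congr 1 with p
  simp only [Equiv.prodComm_apply, psi2Coeff_swap, Prod.fst_swap, Prod.snd_swap]
  ring

lemma psi2Euler_swap (a c₁ c₂ X Y : ℝ) : psi2Euler a c₁ c₂ X Y = psi2Euler a c₂ c₁ Y X := by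
  rw [psi2Euler, psi2Euler, ← (Equiv.prodComm ℕ ℕ).tsum_eq
    fun p => psi2Coeff a c₂ c₁ p * Y ^ p.1 * X ^ p.2 * (a + p.1 + p.2)]
  congr 1 with p
  simp only [Equiv.prodComm_apply, psi2Coeff_swap, Prod.fst_swap, Prod.snd_swap]
  ring

lemma psi2Coeff_succ_fst_mul (a c₁ c₂ : ℝ) {m : ℕ} (hc : c₁ + m ≠ 0) (n : ℕ) :
    psi2Coeff a c₁ c₂ (m + 1, n) * ((m + 1) * (c₁ + m))
      = psi2Coeff a c₁ c₂ (m, n) * (a + m + n) := by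
  simp only [psi2Coeff, add_right_comm m 1 n, poch_succ, Nat.factorial_succ]
  push_cast
  field_simp
  ring

lemma mul_psi2Euler_eq_tsum {c₁ : ℝ} (a c₂ : ℝ) (hc₁ : ∀ n : ℕ, c₁ ≠ -n) (X Y : ℝ) :
    X * psi2Euler a c₁ c₂ X Y
      = ∑' p : ℕ × ℕ, psi2Coeff a c₁ c₂ p * X ^ p.1 * Y ^ p.2 * (p.1 * (p.1 - 1 + c₁)) := by
  have hinj : Function.Injective fun p : ℕ × ℕ => (p.1 + 1, p.2) := fun p q h => by
    simp only [Prod.mk.injEq, Nat.add_right_cancel_iff] at h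
    exact Prod.ext h.1 h.2
  symm
  rw [psi2Euler, ← tsum_mul_left, ← hinj.tsum_eq]
  · congr 1 with ⟨m, n⟩
    have hc : c₁ + m ≠ 0 := fun h => hc₁ m (by linarith)
    calc psi2Coeff a c₁ c₂ (m + 1, n) * X ^ (m + 1) * Y ^ n
          * (((m + 1 : ℕ) : ℝ) * ((m + 1 : ℕ) - 1 + c₁))
        = X ^ (m + 1) * Y ^ n * (psi2Coeff a c₁ c₂ (m + 1, n) * ((m + 1) * (c₁ + m))) := by
          push_cast; ring
      _ = X * (psi2Coeff a c₁ c₂ (m, n) * X ^ m * Y ^ n * (a + m + n)) := by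
          rw [psi2Coeff_succ_fst_mul a c₁ c₂ hc]; ring
  · rintro ⟨_ | m, n⟩ h
    · simp at h
    · exact ⟨(m, n), rfl⟩

lemma Psi2_mul_sq_eq_tsum (a c₁ c₂ A B s : ℝ) :
    Psi2 a c₁ c₂ (A * s ^ 2) B
      = ∑' p : ℕ × ℕ, psi2Coeff a c₁ c₂ p * A ^ p.1 * B ^ p.2 * s ^ (2 * p.1) := by
  refine tsum_congr fun p => ?_
  rw [psi2Coeff, mul_pow, pow_mul]
  ring

lemma Psi2_radial_euler (a : ℝ) {c₁ c₂ : ℝ} (hc₁ : ∀ n : ℕ, c₁ ≠ -n) (hc₂ : ∀ n : ℕ, c₂ ≠ -n)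
    (A B x : ℝ) :
    x ^ 2 * iteratedDeriv 2 (fun s => Psi2 a c₁ c₂ (A * s ^ 2) B) x
        + (2 * c₁ - 1) * x * deriv (fun s => Psi2 a c₁ c₂ (A * s ^ 2) B) x
      = 4 * (A * x ^ 2) * psi2Euler a c₁ c₂ (A * x ^ 2) B := by
  have ha : ∀ R, Summable fun p : ℕ × ℕ =>
      psi2Coeff a c₁ c₂ p * A ^ p.1 * B ^ p.2 * R ^ (2 * p.1) :=
    fun R => (summable_psi2Coeff_mul_pow a hc₁ hc₂ (A * R ^ 2) B).congr fun p => by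
      rw [mul_pow, pow_mul]; ring
  simp only [Psi2_mul_sq_eq_tsum]
  rw [sq_mul_iteratedDeriv_two_add_mul_deriv_tsum_mul_pow ha, mul_assoc,
    mul_psi2Euler_eq_tsum a c₂ hc₁, ← tsum_mul_left]
  congr 1 with p
  rw [mul_pow, pow_mul]
  push_cast
  ring

lemma Psi2_mul_mul_eq_tsum (a c₁ c₂ A B w : ℝ) :
    Psi2 a c₁ c₂ (A * w) (B * w)
      = ∑' p : ℕ × ℕ, psi2Coeff a c₁ c₂ p * A ^ p.1 * B ^ p.2 * w ^ (p.1 + p.2) := by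
  refine tsum_congr fun p => ?_
  rw [psi2Coeff, mul_pow, mul_pow, pow_add]
  ring

lemma summable_psi2_homogeneous (a : ℝ) {c₁ c₂ : ℝ} (hc₁ : ∀ n : ℕ, c₁ ≠ -n)
    (hc₂ : ∀ n : ℕ, c₂ ≠ -n) (A B R : ℝ) :
    Summable fun p : ℕ × ℕ => psi2Coeff a c₁ c₂ p * A ^ p.1 * B ^ p.2 * R ^ (p.1 + p.2) :=
  (summable_psi2Coeff_mul_pow a hc₁ hc₂ (A * R) (B * R)).congr fun p => by
    rw [mul_pow, mul_pow, pow_add]; ring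

lemma differentiable_Psi2_homogeneous (a : ℝ) {c₁ c₂ : ℝ} (hc₁ : ∀ n : ℕ, c₁ ≠ -n)
    (hc₂ : ∀ n : ℕ, c₂ ≠ -n) (A B : ℝ) :
    Differentiable ℝ fun w => Psi2 a c₁ c₂ (A * w) (B * w) := by
  simp only [Psi2_mul_mul_eq_tsum]
  exact differentiable_tsum_mul_pow (summable_psi2_homogeneous a hc₁ hc₂ A B)

lemma Psi2_homogeneous_euler (a : ℝ) {c₁ c₂ : ℝ} (hc₁ : ∀ n : ℕ, c₁ ≠ -n) (hc₂ : ∀ n : ℕ, c₂ ≠ -n)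
    (A B w : ℝ) :
    w * deriv (fun w => Psi2 a c₁ c₂ (A * w) (B * w)) w + a * Psi2 a c₁ c₂ (A * w) (B * w)
      = psi2Euler a c₁ c₂ (A * w) (B * w) := by
  simp only [Psi2_mul_mul_eq_tsum]
  rw [mul_deriv_add_tsum_mul_pow (summable_psi2_homogeneous a hc₁ hc₂ A B)]
  refine tsum_congr fun p => ?_
  rw [mul_pow, mul_pow, pow_add]
  push_cast
  ring

lemma uPsi1_swap (α β lam x y t : ℝ) : uPsi1 α β lam x y t = uPsi1 β α lam y x t := by
  rw [uPsi1, uPsi1, Psi2_swap]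

lemma uPsi1_radial (α β lam : ℝ) (hc₁ : ∀ n : ℕ, (1 + 2 * α) / 2 ≠ -(n : ℝ))
    (hc₂ : ∀ n : ℕ, (1 + 2 * β) / 2 ≠ -(n : ℝ)) {x : ℝ} (hx : x ≠ 0) (y t : ℝ) :
    iteratedDeriv 2 (fun s => uPsi1 α β lam s y t) x
        + 2 * α / x * deriv (fun s => uPsi1 α β lam s y t) x
      = -(lam * t ^ (-(1 / 2) : ℝ) / (2 * t)) * psi2Euler (1 / 2) ((1 + 2 * α) / 2)
          ((1 + 2 * β) / 2) (-(x ^ 2) / (8 * t)) (-(y ^ 2) / (8 * t)) := by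
  set f := fun s => Psi2 (1 / 2) ((1 + 2 * α) / 2) ((1 + 2 * β) / 2) (-(8 * t)⁻¹ * s ^ 2)
    (-(y ^ 2) / (8 * t))
  have hu : (fun s => uPsi1 α β lam s y t) = fun s => lam * t ^ (-(1 / 2) : ℝ) * f s := by
    funext s
    rw [uPsi1, show -(s ^ 2) / (8 * t) = -(8 * t)⁻¹ * s ^ 2 by ring]
  have h : x ^ 2 * iteratedDeriv 2 f x + 2 * α * x * deriv f x
      = 4 * (-(x ^ 2) / (8 * t)) * psi2Euler (1 / 2) ((1 + 2 * α) / 2) ((1 + 2 * β) / 2)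
          (-(x ^ 2) / (8 * t)) (-(y ^ 2) / (8 * t)) := by
    have := Psi2_radial_euler (1 / 2) hc₁ hc₂ (-(8 * t)⁻¹) (-(y ^ 2) / (8 * t)) x
    rwa [show 2 * ((1 + 2 * α) / 2) - 1 = 2 * α by ring,
      show -(8 * t)⁻¹ * x ^ 2 = -(x ^ 2) / (8 * t) by ring] at this
  rw [hu, iteratedDeriv_const_mul_field, deriv_const_mul_field']
  beta_reduce
  generalize iteratedDeriv 2 f x = f₂ at h ⊢
  generalize deriv f x = f₁ at h ⊢
  generalize psi2Euler _ _ _ _ _ = E at h ⊢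
  have key : f₂ + 2 * α / x * f₁ = -(1 / (2 * t)) * E := by
    calc f₂ + 2 * α / x * f₁ = (x ^ 2 * f₂ + 2 * α * x * f₁) / x ^ 2 := by field_simp
      _ = -(1 / (2 * t)) * E := by rw [h, div_eq_iff (pow_ne_zero 2 hx)]; ring
  linear_combination (lam * t ^ (-(1 / 2) : ℝ)) * key

lemma deriv_uPsi1_time (α β lam : ℝ) (hc₁ : ∀ n : ℕ, (1 + 2 * α) / 2 ≠ -(n : ℝ))
    (hc₂ : ∀ n : ℕ, (1 + 2 * β) / 2 ≠ -(n : ℝ)) (x y : ℝ) {t : ℝ} (ht : 0 < t) :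
    deriv (fun s => uPsi1 α β lam x y s) t
      = -(lam * t ^ (-(1 / 2) : ℝ) / t) * psi2Euler (1 / 2) ((1 + 2 * α) / 2)
          ((1 + 2 * β) / 2) (-(x ^ 2) / (8 * t)) (-(y ^ 2) / (8 * t)) := by
  set g := fun w => Psi2 (1 / 2) ((1 + 2 * α) / 2) ((1 + 2 * β) / 2)
    (-(x ^ 2) / 8 * w) (-(y ^ 2) / 8 * w)
  have hu : (fun s => uPsi1 α β lam x y s) = fun s => lam * s ^ (-(1 / 2) : ℝ) * g s⁻¹ := by
    funext s
    simp only [uPsi1, g]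
    rw [show -(x ^ 2) / 8 * s⁻¹ = -(x ^ 2) / (8 * s) by ring,
      show -(y ^ 2) / 8 * s⁻¹ = -(y ^ 2) / (8 * s) by ring]
  have hderiv : HasDerivAt (fun s => lam * s ^ (-(1 / 2) : ℝ) * g s⁻¹)
      (lam * (-(1 / 2) * t ^ (-(1 / 2) - 1 : ℝ)) * g t⁻¹
        + lam * t ^ (-(1 / 2) : ℝ) * (deriv g t⁻¹ * -(t ^ 2)⁻¹)) t :=
    ((Real.hasDerivAt_rpow_const (Or.inl ht.ne')).const_mul lam).mul
      ((differentiable_Psi2_homogeneous (1 / 2) hc₁ hc₂ _ _ t⁻¹).hasDerivAt.comp t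
        (hasDerivAt_inv ht.ne'))
  have h : t⁻¹ * deriv g t⁻¹ + 1 / 2 * g t⁻¹
      = psi2Euler (1 / 2) ((1 + 2 * α) / 2) ((1 + 2 * β) / 2) (-(x ^ 2) / (8 * t))
          (-(y ^ 2) / (8 * t)) := by
    rw [show -(x ^ 2) / (8 * t) = -(x ^ 2) / 8 * t⁻¹ by ring,
      show -(y ^ 2) / (8 * t) = -(y ^ 2) / 8 * t⁻¹ by ring]
    exact Psi2_homogeneous_euler (1 / 2) hc₁ hc₂ _ _ t⁻¹
  rw [hu, hderiv.deriv, ← h, Real.rpow_sub_one ht.ne']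
  generalize deriv g t⁻¹ = g'
  generalize g t⁻¹ = g₀
  field_simp
  ring

theorem uPsi1_solves (α β lam : ℝ)
    (hc₁ : ∀ n : ℕ, (1 + 2 * α) / 2 ≠ -(n : ℝ))
    (hc₂ : ∀ n : ℕ, (1 + 2 * β) / 2 ≠ -(n : ℝ)) :
    ∀ x y t : ℝ, 0 < x → 0 < y → 0 < t →
      deriv (fun s => uPsi1 α β lam x y s) t
        - iteratedDeriv 2 (fun s => uPsi1 α β lam s y t) x
        - iteratedDeriv 2 (fun s => uPsi1 α β lam x s t) y
        - (2 * α / x) * deriv (fun s => uPsi1 α β lam s y t) x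
        - (2 * β / y) * deriv (fun s => uPsi1 α β lam x s t) y = 0 := by
  intro x y t hx hy ht
  have hx_part := uPsi1_radial α β lam hc₁ hc₂ hx.ne' y t
  have hy_part := uPsi1_radial β α lam hc₂ hc₁ hy.ne' x t
  have hswap : (fun s => uPsi1 β α lam s x t) = fun s => uPsi1 α β lam x s t :=
    funext fun s => (uPsi1_swap α β lam x s t).symm
  rw [hswap, ← psi2Euler_swap] at hy_part
  rw [deriv_uPsi1_time α β lam hc₁ hc₂ x y ht]
  linear_combination -hx_part - hy_part
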